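/- Let h ≥ 2 and let t be an integer with t ≥ 1 + (log h)/(log 2). Let (W_i)_{i=0}^{h-1} be a partition of the nonnegative integers into nonempty pairwise disjoint sets such that for each i ∈ [0, h−1] there is an infinite set M_i of positive integers with the property that the interval [M − t + 1, M] is contained in W_i for every M ∈ M_i. Let (g_i)_{i=0}^∞ be a G-adic sequence and let A = ⋃_{i=0}^{h-1} A_G(W_i). Then for every a ∈ A there are infinitely many positive integers n that cannot be written as a sum of h elements of A \ {a}; in particular, A \ {a} is not an asymptotic basis of order h. -/

import Mathlib

open Finset

/-- A `𝒢`-adic sequence: strictly increasing, `g 0 = 1`, and `g i ∣ g (i+1)` for all `i`. -/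
def GadicSeq (g : ℕ → ℕ) : Prop :=
  StrictMono g ∧ g 0 = 1 ∧ ∀ i, g i ∣ g (i + 1)

/-- The set `A_𝒢(W)` of positive integers `∑_{j ∈ F} x j * g j` with `F` a nonempty finite
subset of `W` and `x j ∈ [1, d_{j+1} - 1]` where `d_{j+1} = g (j+1) / g j`. -/
def AG (g : ℕ → ℕ) (W : Set ℕ) : Set ℕ :=
  { n | ∃ (F : Finset ℕ) (x : ℕ → ℕ), F.Nonempty ∧ ↑F ⊆ W ∧
        (∀ j ∈ F, 1 ≤ x j ∧ x j ≤ g (j + 1) / g j - 1) ∧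
        n = ∑ j ∈ F, x j * g j }

/-- `n` is a sum of `h` (not necessarily distinct) elements of `A`. -/
def IsSumOf (A : Set ℕ) (h n : ℕ) : Prop :=
  ∃ f : Fin h → ℕ, (∀ i, f i ∈ A) ∧ n = ∑ i, f i

/-- `A` is an asymptotic basis of order `h`. -/
def AsympBasis (h : ℕ) (A : Set ℕ) : Prop :=
  ∃ N, ∀ n ≥ N, IsSumOf A h n

/-- `A` is a minimal asymptotic basis of order `h`. -/
def MinAsympBasis (h : ℕ) (A : Set ℕ) : Prop :=
  AsympBasis h A ∧ ∀ B ⊂ A, ¬ AsympBasis h B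

/-!
Write `a = ∑_{j ∈ F} x_j g_j` with `F ⊆ W_{i₀}` and fix `q ∈ F`. Let `n` be `a` plus the maximal
digit `d_{p+1} - 1` at every position `p < B` outside `W_{i₀}`, where `B` is so large that below
`B` every other class `W_v` contains a run `[L, K]` of `t` consecutive positions. Suppose
`n = f_1 + ⋯ + f_h` with `f_j ∈ A_𝒢(W_{c j})`.

As `h < 2^t`, residues modulo `g_{K+1}` that all stay below `g_L` cannot add up to the run of
maximal digits on `[L, K]`, so `c` hits every class other than `i₀`. If `c` missed `i₀`, each
class would be used at most twice, and modulo `g_{q+1}` the `f_j` would contribute at most twice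
the sum `P < g_q` of the maximal digits below `q` outside `W_{i₀}`, whereas `n` leaves a residue
of at least `g_q + P`. So `c` is a bijection, the digit supports of the `f_j` are disjoint, digits
add without carries, and reading off the digits of `n` on `W_{i₀}` shows that the summand taken
from `A_𝒢(W_{i₀})` is `a` itself.
-/

def gadicDigit (g : ℕ → ℕ) (n p : ℕ) : ℕ := n / g p % (g (p + 1) / g p)

lemma Finset.sum_nat_mod_le {ι : Type*} (s : Finset ι) (f : ι → ℕ) (m : ℕ) :
    (∑ i ∈ s, f i) % m ≤ ∑ i ∈ s, f i % m := by
  rw [sum_nat_mod]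
  exact Nat.mod_le _ _

namespace GadicSeq

variable {g : ℕ → ℕ}

lemma pos (hg : GadicSeq g) (i : ℕ) : 0 < g i := by
  have := hg.1.monotone (Nat.zero_le i)
  rw [hg.2.1] at this
  exact this

lemma dvd_of_le (hg : GadicSeq g) {i j : ℕ} (hij : i ≤ j) : g i ∣ g j :=
  Nat.le_induction dvd_rfl (fun k _ ih => ih.trans (hg.2.2 k)) j hij

lemma quot_mul (hg : GadicSeq g) (p : ℕ) : g (p + 1) / g p * g p = g (p + 1) :=
  Nat.div_mul_cancel (hg.2.2 p)

lemma two_le_quot (hg : GadicSeq g) (p : ℕ) : 2 ≤ g (p + 1) / g p := by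
  by_contra! h
  have := Nat.mul_le_mul_right (g p) (Nat.le_of_lt_succ h)
  rw [hg.quot_mul, one_mul] at this
  exact this.not_gt (hg.1 (Nat.lt_succ_self p))

lemma two_mul_le (hg : GadicSeq g) (p : ℕ) : 2 * g p ≤ g (p + 1) :=
  hg.quot_mul p ▸ Nat.mul_le_mul_right _ (hg.two_le_quot p)

lemma two_pow_mul_le (hg : GadicSeq g) (i k : ℕ) : 2 ^ k * g i ≤ g (i + k) := by
  induction k with
  | zero => simp
  | succ k ih =>
    calc 2 ^ (k + 1) * g i = 2 * (2 ^ k * g i) := by ring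
      _ ≤ 2 * g (i + k) := Nat.mul_le_mul_left 2 ih
      _ ≤ g (i + (k + 1)) := hg.two_mul_le _

lemma maxDigit_mul (hg : GadicSeq g) (p : ℕ) :
    (g (p + 1) / g p - 1) * g p = g (p + 1) - g p := by
  rw [Nat.sub_mul, hg.quot_mul, one_mul]

lemma sum_range_maxDigit (hg : GadicSeq g) (n : ℕ) :
    ∑ p ∈ range n, (g (p + 1) / g p - 1) * g p = g n - 1 := by
  simp_rw [hg.maxDigit_mul]
  rw [sum_range_tsub hg.1.monotone, hg.2.1]

lemma sum_Icc_maxDigit (hg : GadicSeq g) {L K : ℕ} (hLK : L ≤ K + 1) :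
    ∑ p ∈ Icc L K, (g (p + 1) / g p - 1) * g p = g (K + 1) - g L := by
  have h := sum_range_add_sum_Ico (fun p => (g (p + 1) / g p - 1) * g p) hLK
  rw [hg.sum_range_maxDigit, hg.sum_range_maxDigit, Finset.Ico_add_one_right_eq_Icc] at h
  have := hg.pos L
  have := hg.1.monotone hLK
  omega

lemma sum_lt (hg : GadicSeq g) {F : Finset ℕ} {x : ℕ → ℕ} {C : ℕ}
    (hx : ∀ j ∈ F, x j ≤ g (j + 1) / g j - 1) (hF : ∀ j ∈ F, j < C) :
    ∑ j ∈ F, x j * g j < g C := by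
  calc ∑ j ∈ F, x j * g j ≤ ∑ j ∈ F, (g (j + 1) / g j - 1) * g j :=
        sum_le_sum fun j hj => Nat.mul_le_mul_right _ (hx j hj)
    _ ≤ ∑ j ∈ range C, (g (j + 1) / g j - 1) * g j :=
        sum_le_sum_of_subset fun j hj => mem_range.2 (hF j hj)
    _ < g C := by rw [hg.sum_range_maxDigit]; have := hg.pos C; omega

lemma sum_mod (hg : GadicSeq g) {F : Finset ℕ} {x : ℕ → ℕ}
    (hx : ∀ j ∈ F, x j ≤ g (j + 1) / g j - 1) (C : ℕ) :
    (∑ j ∈ F, x j * g j) % g C = ∑ j ∈ F with j < C, x j * g j := by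
  obtain ⟨k, hk⟩ : g C ∣ ∑ j ∈ F with ¬ j < C, x j * g j :=
    dvd_sum fun j hj => Dvd.dvd.mul_left (hg.dvd_of_le (not_lt.1 (mem_filter.1 hj).2)) _
  rw [← sum_filter_add_sum_filter_not F (· < C), hk, Nat.add_mul_mod_self_left,
    Nat.mod_eq_of_lt (hg.sum_lt (fun j hj => hx j (mem_filter.1 hj).1)
      fun j hj => (mem_filter.1 hj).2)]

lemma sum_le_sum_mod (hg : GadicSeq g) {S T : Finset ℕ} {x : ℕ → ℕ}
    (hx : ∀ j ∈ S, x j ≤ g (j + 1) / g j - 1) (hTS : T ⊆ S) {C : ℕ}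
    (hT : ∀ j ∈ T, j < C) :
    ∑ j ∈ T, x j * g j ≤ (∑ j ∈ S, x j * g j) % g C := by
  rw [hg.sum_mod hx]
  exact sum_le_sum_of_subset fun j hj => mem_filter.2 ⟨hTS hj, hT j hj⟩

lemma gadicDigit_eq (hg : GadicSeq g) (n p : ℕ) : gadicDigit g n p = n % g (p + 1) / g p := by
  rw [gadicDigit, ← Nat.mod_mul_right_div_self, mul_comm, hg.quot_mul]

lemma gadicDigit_sum (hg : GadicSeq g) {F : Finset ℕ} {x : ℕ → ℕ}
    (hx : ∀ j ∈ F, x j ≤ g (j + 1) / g j - 1) (p : ℕ) :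
    gadicDigit g (∑ j ∈ F, x j * g j) p = if p ∈ F then x p else 0 := by
  have hsplit : ∑ j ∈ F with j < p + 1, x j * g j =
      ∑ j ∈ F with j < p, x j * g j + (if p ∈ F then x p else 0) * g p := by
    rw [ite_zero_mul, ← sum_ite_eq' F p fun j => x j * g j, sum_filter, sum_filter,
      ← sum_add_distrib]
    refine sum_congr rfl fun j _ => ?_
    split_ifs <;> omega
  have hlow : ∑ j ∈ F with j < p, x j * g j < g p :=
    hg.sum_lt (fun j hj => hx j (mem_filter.1 hj).1) fun j hj => (mem_filter.1 hj).2
  rw [hg.gadicDigit_eq, hg.sum_mod hx, hsplit, Nat.add_mul_div_right _ _ (hg.pos p),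
    Nat.div_eq_of_lt hlow, zero_add]

lemma mod_lt_of_mem_AG (hg : GadicSeq g) {W : Set ℕ} {f : ℕ} (hf : f ∈ AG g W) {L K : ℕ}
    (hW : ∀ p ∈ W, p < L ∨ K < p) : f % g (K + 1) < g L := by
  obtain ⟨F, x, -, hFW, hx, rfl⟩ := hf
  rw [hg.sum_mod fun j hj => (hx j hj).2]
  refine hg.sum_lt (fun j hj => (hx j (mem_filter.1 hj).1).2) fun j hj => ?_
  have := hW j (hFW (mem_filter.1 hj).1)
  have := (mem_filter.1 hj).2
  omega

lemma mod_le_of_mem_AG (hg : GadicSeq g) {W : Set ℕ} [DecidablePred (· ∈ W)] {f : ℕ}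
    (hf : f ∈ AG g W) (C : ℕ) :
    f % g C ≤ ∑ p ∈ range C with p ∈ W, (g (p + 1) / g p - 1) * g p := by
  obtain ⟨F, x, -, hFW, hx, rfl⟩ := hf
  rw [hg.sum_mod fun j hj => (hx j hj).2]
  calc ∑ j ∈ F with j < C, x j * g j ≤ ∑ j ∈ F with j < C, (g (j + 1) / g j - 1) * g j :=
        sum_le_sum fun j hj => Nat.mul_le_mul_right _ (hx j (mem_filter.1 hj).1).2
    _ ≤ _ := sum_le_sum_of_subset fun j hj => by
        obtain ⟨hjF, hjC⟩ := mem_filter.1 hj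
        exact mem_filter.2 ⟨mem_range.2 hjC, hFW hjF⟩

lemma gadicDigit_eq_zero_of_mem_AG (hg : GadicSeq g) {W : Set ℕ} {f p : ℕ} (hf : f ∈ AG g W)
    (hp : p ∉ W) : gadicDigit g f p = 0 := by
  obtain ⟨F, x, -, hFW, hx, rfl⟩ := hf
  rw [hg.gadicDigit_sum fun j hj => (hx j hj).2, if_neg (show p ∉ F from fun hpF => hp (hFW hpF))]

lemma eq_of_gadicDigit_eq (hg : GadicSeq g) {U V : Set ℕ} {a b : ℕ} (ha : a ∈ AG g U)
    (hb : b ∈ AG g V) (h : ∀ p, gadicDigit g a p = gadicDigit g b p) : a = b := by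
  obtain ⟨F, x, -, -, hx, rfl⟩ := ha
  obtain ⟨F', x', -, -, hx', rfl⟩ := hb
  have hdig (p : ℕ) : (if p ∈ F then x p else 0) = if p ∈ F' then x' p else 0 := by
    rw [← hg.gadicDigit_sum fun j hj => (hx j hj).2,
      ← hg.gadicDigit_sum fun j hj => (hx' j hj).2, h p]
  have hFF : F = F' := by
    ext p
    have hp_dig := hdig p
    constructor <;> intro hp <;> by_contra hp'
    · rw [if_pos hp, if_neg hp'] at hp_dig
      exact (hx p hp).1.not_gt (by omega)
    · rw [if_neg hp', if_pos hp] at hp_dig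
      exact (hx' p hp).1.not_gt (by omega)
  subst hFF
  exact sum_congr rfl fun p hp => by simpa [hp] using congrArg (· * g p) (hdig p)

lemma gadicDigit_sum_of_pairwise_disjoint (hg : GadicSeq g) {ι : Type*} [Fintype ι]
    {W : ι → Set ℕ} (hW : Pairwise fun i j => Disjoint (W i) (W j)) {f : ι → ℕ}
    (hf : ∀ i, f i ∈ AG g (W i)) (p : ℕ) :
    gadicDigit g (∑ i, f i) p = ∑ i, gadicDigit g (f i) p := by
  classical
  choose F x _ hFW hx hfx using hf
  have hdisj : ∀ i j, i ≠ j → ∀ q ∈ F i, q ∉ F j := fun i j hij q hi hj =>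
    Set.disjoint_left.1 (hW hij) (hFW i hi) (hFW j hj)
  set y : ℕ → ℕ := fun q => ∑ i, if q ∈ F i then x i q else 0
  have hy : ∀ i, ∀ q ∈ F i, y q = x i q := fun i q hq =>
    (Fintype.sum_eq_single i fun j hji => if_neg (hdisj i j hji.symm q hq)).trans (if_pos hq)
  have hsum : ∑ i, f i = ∑ q ∈ univ.biUnion F, y q * g q := by
    rw [sum_biUnion fun i _ j _ hij => disjoint_left.2 (hdisj i j hij)]
    exact sum_congr rfl fun i _ => (hfx i).trans (sum_congr rfl fun q hq => by rw [hy i q hq])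
  have hy_le : ∀ q ∈ univ.biUnion F, y q ≤ g (q + 1) / g q - 1 := fun q hq => by
    obtain ⟨i, -, hi⟩ := mem_biUnion.1 hq
    exact hy i q hi ▸ (hx i q hi).2
  rw [hsum, hg.gadicDigit_sum hy_le]
  simp only [hfx, hg.gadicDigit_sum fun q hq => (hx _ q hq).2]
  split_ifs with hp
  · rfl
  · exact (sum_eq_zero fun i _ =>
      if_neg fun hpi => hp (mem_biUnion.2 ⟨i, mem_univ i, hpi⟩)).symm

lemma mul_le_sub_of_lt_two_pow (hg : GadicSeq g) {m t L K : ℕ} (hm : m < 2 ^ t)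
    (hLK : L + t = K + 1) : m * g L ≤ g (K + 1) - g L :=
  calc m * g L ≤ (2 ^ t - 1) * g L := Nat.mul_le_mul_right _ (by omega)
    _ = 2 ^ t * g L - g L := by rw [Nat.sub_mul, one_mul]
    _ ≤ g (K + 1) - g L := Nat.sub_le_sub_right (hLK ▸ hg.two_pow_mul_le L t) _

lemma sub_le_mod_of_maxDigit (hg : GadicSeq g) {S : Finset ℕ} {y : ℕ → ℕ}
    (hy : ∀ p ∈ S, y p ≤ g (p + 1) / g p - 1) {L K : ℕ} (hLK : L ≤ K + 1)
    (hsub : Icc L K ⊆ S)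
    (hmax : ∀ p ∈ Icc L K, y p = g (p + 1) / g p - 1) :
    g (K + 1) - g L ≤ (∑ p ∈ S, y p * g p) % g (K + 1) := by
  rw [← hg.sum_Icc_maxDigit hLK]
  refine (sum_congr rfl fun p hp => by rw [hmax p hp]).trans_le
    (hg.sum_le_sum_mod hy hsub fun p hp => ?_)
  have := (mem_Icc.1 hp).2
  omega

lemma add_sum_maxDigit_le_mod (hg : GadicSeq g) {S T : Finset ℕ} {y : ℕ → ℕ}
    (hy : ∀ p ∈ S, y p ≤ g (p + 1) / g p - 1) {q : ℕ} (hq : q ∈ S) (hyq : 1 ≤ y q)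
    (hTS : T ⊆ S) (hTq : ∀ p ∈ T, p < q) (hmax : ∀ p ∈ T, y p = g (p + 1) / g p - 1) :
    g q + ∑ p ∈ T, (g (p + 1) / g p - 1) * g p ≤ (∑ p ∈ S, y p * g p) % g (q + 1) := by
  have hqT : q ∉ T := fun h => (hTq q h).false
  calc g q + ∑ p ∈ T, (g (p + 1) / g p - 1) * g p ≤ y q * g q + ∑ p ∈ T, y p * g p :=
        add_le_add (Nat.le_mul_of_pos_left _ hyq) (sum_congr rfl fun p hp => by rw [hmax p hp]).le
    _ = ∑ p ∈ insert q T, y p * g p := (sum_insert (f := fun p => y p * g p) hqT).symm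
    _ ≤ _ := hg.sum_le_sum_mod hy (insert_subset hq hTS) fun p hp => by
        rcases mem_insert.1 hp with rfl | hp
        · exact Nat.lt_succ_self p
        · exact Nat.lt_succ_of_lt (hTq p hp)

end GadicSeq

section Pigeonhole

variable {κ ι : Type*} [DecidableEq κ] [Fintype ι]

lemma card_filter_eq_le_two [Fintype κ] {c : ι → κ} {v₀ : κ}
    (hcard : Fintype.card ι = Fintype.card κ) (hhit : ∀ v ≠ v₀, ∃ i, c i = v) (v : κ) :
    #{i | c i = v} ≤ 2 := by
  have hsurj : Set.SurjOn c ↑(univ.filter fun i => ¬c i = v) ↑((univ.erase v₀).erase v) :=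
    fun w hw => by
      obtain ⟨hwv₀, hwv⟩ := by simpa using hw
      obtain ⟨i, rfl⟩ := hhit _ hwv₀
      exact ⟨i, by simpa using hwv, rfl⟩
  have h₁ := card_le_card_of_surjOn c hsurj
  have h₂ := card_filter_add_card_filter_not (s := univ) (c · = v)
  have h₃ := pred_card_le_card_erase (s := univ.erase v₀) (a := v)
  have h₄ := pred_card_le_card_erase (s := (univ : Finset κ)) (a := v₀)
  simp only [card_univ, hcard] at h₂ h₄
  omega

lemma sum_sum_filter_le_two_mul {col : ℕ → κ} {c : ι → κ} {v₀ : κ}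
    (hmiss : ∀ i, c i ≠ v₀) (hfib : ∀ v, #{i | c i = v} ≤ 2) (R : Finset ℕ) (w : ℕ → ℕ) :
    ∑ i, ∑ p ∈ R with col p = c i, w p ≤ 2 * ∑ p ∈ R with col p ≠ v₀, w p := by
  simp only [sum_filter, mul_sum]
  rw [sum_comm]
  refine sum_le_sum fun p _ => ?_
  rw [← sum_filter, sum_const, smul_eq_mul]
  split_ifs with hp
  · exact Nat.mul_le_mul_right _ (by simpa only [eq_comm] using hfib (col p))
  · simp only [not_not] at hp
    simp [hp, eq_comm (a := v₀), hmiss]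

end Pigeonhole

namespace GadicSeq

variable {κ ι : Type*} [DecidableEq κ] [Fintype ι] {g : ℕ → ℕ} {col : ℕ → κ}

lemma exists_color_eq_of_window (hg : GadicSeq g) [Nonempty ι] {f : ι → ℕ} {c : ι → κ}
    (hf : ∀ i, f i ∈ AG g {p | col p = c i}) {L K : ℕ} {v : κ}
    (hwin : ∀ p ∈ Icc L K, col p = v)
    (hn : Fintype.card ι * g L ≤ (∑ i, f i) % g (K + 1)) :
    ∃ i, c i = v := by
  by_contra! hne
  have hlt (i : ι) : f i % g (K + 1) < g L := hg.mod_lt_of_mem_AG (hf i) fun p hp => by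
    by_contra! hpLK
    exact hne i (hp.symm.trans (hwin p (mem_Icc.2 hpLK)))
  have := calc (∑ i, f i) % g (K + 1) ≤ ∑ i, f i % g (K + 1) := sum_nat_mod_le _ _ _
    _ < ∑ _i : ι, g L := sum_lt_sum_of_nonempty univ_nonempty fun i _ => hlt i
    _ = Fintype.card ι * g L := by rw [sum_const, card_univ, smul_eq_mul]
  omega

lemma exists_color_eq_of_le_mod [Fintype κ] (hg : GadicSeq g) {f : ι → ℕ} {c : ι → κ}
    (hf : ∀ i, f i ∈ AG g {p | col p = c i}) (hcard : Fintype.card ι = Fintype.card κ)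
    {v₀ : κ} (hhit : ∀ v ≠ v₀, ∃ i, c i = v) {q : ℕ} (hq : col q = v₀)
    (hn : g q + ∑ p ∈ range (q + 1) with col p ≠ v₀, (g (p + 1) / g p - 1) * g p ≤
      (∑ i, f i) % g (q + 1)) :
    ∃ i, c i = v₀ := by
  by_contra! hmiss
  set P := ∑ p ∈ range (q + 1) with col p ≠ v₀, (g (p + 1) / g p - 1) * g p
  have hP : P < g q := hg.sum_lt (fun _ _ => le_rfl) fun p hp => by
    obtain ⟨hpq, hpv⟩ := mem_filter.1 hp
    exact lt_of_le_of_ne (Nat.lt_succ_iff.1 (mem_range.1 hpq)) fun h => hpv (h ▸ hq)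
  have := calc (∑ i, f i) % g (q + 1) ≤ ∑ i, f i % g (q + 1) := sum_nat_mod_le _ _ _
    _ ≤ ∑ i, ∑ p ∈ range (q + 1) with col p = c i, (g (p + 1) / g p - 1) * g p :=
        sum_le_sum fun i _ => hg.mod_le_of_mem_AG (hf i) _
    _ ≤ 2 * P := sum_sum_filter_le_two_mul hmiss (card_filter_eq_le_two hcard hhit) _ _
  omega

lemma eq_of_color_injective (hg : GadicSeq g) {f : ι → ℕ} {c : ι → κ}
    (hc : Function.Injective c) (hf : ∀ i, f i ∈ AG g {p | col p = c i}) {a : ℕ} {v₀ : κ}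
    (ha : a ∈ AG g {p | col p = v₀}) {τ : ι} (hτ : c τ = v₀)
    (hdig : ∀ p, col p = v₀ → gadicDigit g (∑ i, f i) p = gadicDigit g a p) : f τ = a := by
  refine hg.eq_of_gadicDigit_eq (hf τ) ha fun p => ?_
  by_cases hp : col p = v₀
  · have hdisj : Pairwise fun i j => Disjoint {p | col p = c i} {p | col p = c j} :=
      fun i j hij => Set.disjoint_left.2 fun q hqi hqj => hij (hc (hqi.symm.trans hqj))
    have hzero (i : ι) (hi : i ≠ τ) : gadicDigit g (f i) p = 0 :=
      hg.gadicDigit_eq_zero_of_mem_AG (hf i) fun hpi => hi (hc (hpi.symm.trans (hp.trans hτ.symm)))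
    rw [← hdig p hp, hg.gadicDigit_sum_of_pairwise_disjoint hdisj hf,
      Fintype.sum_eq_single τ hzero]
  · rw [hg.gadicDigit_eq_zero_of_mem_AG (hf τ) (by simpa [hτ] using hp),
      hg.gadicDigit_eq_zero_of_mem_AG ha hp]

def ForcesSummand [Fintype κ] (g : ℕ → ℕ) (col : ℕ → κ) (v₀ : κ) (a n : ℕ) : Prop :=
  (∃ q, col q = v₀ ∧
    g q + ∑ p ∈ range (q + 1) with col p ≠ v₀, (g (p + 1) / g p - 1) * g p ≤ n % g (q + 1)) ∧
  (∀ v ≠ v₀, ∃ L K, (∀ p ∈ Icc L K, col p = v) ∧ Fintype.card κ * g L ≤ n % g (K + 1)) ∧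
  ∀ p, col p = v₀ → gadicDigit g n p = gadicDigit g a p

lemma exists_eq_of_sum_eq [Fintype κ] (hg : GadicSeq g) {a n : ℕ} {v₀ : κ}
    (ha : a ∈ AG g {p | col p = v₀}) (hn : ForcesSummand g col v₀ a n)
    {f : Fin (Fintype.card κ) → ℕ} (hf : ∀ i, f i ∈ ⋃ v, AG g {p | col p = v})
    (hsum : n = ∑ i, f i) : ∃ i, f i = a := by
  obtain ⟨⟨q, hq, hlow⟩, hwin, hdig⟩ := hn
  choose c hc using fun i => Set.mem_iUnion.1 (hf i)
  subst hsum
  have : Nonempty (Fin (Fintype.card κ)) := ⟨⟨0, Fintype.card_pos_iff.2 ⟨v₀⟩⟩⟩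
  have hhit : ∀ v ≠ v₀, ∃ i, c i = v := fun v hv => by
    obtain ⟨L, K, hLK, hle⟩ := hwin v hv
    exact hg.exists_color_eq_of_window hc hLK (by rwa [Fintype.card_fin])
  obtain ⟨τ, hτ⟩ := hg.exists_color_eq_of_le_mod hc (Fintype.card_fin _) hhit hq hlow
  have hsurj : Function.Surjective c := fun v =>
    if hv : v = v₀ then ⟨τ, hτ.trans hv.symm⟩ else hhit v hv
  have hbij := (Fintype.bijective_iff_surjective_and_card c).2 ⟨hsurj, Fintype.card_fin _⟩
  exact ⟨τ, hg.eq_of_color_injective hbij.1 hc ha hτ hdig⟩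

lemma exists_gt_forcesSummand [Fintype κ] (hg : GadicSeq g) {t : ℕ}
    (hκ : 2 ≤ Fintype.card κ) (ht : Fintype.card κ < 2 ^ t)
    (hwin : ∀ v N, ∃ L K, N < L ∧ L + t = K + 1 ∧ ∀ p ∈ Icc L K, col p = v)
    {v₀ : κ} {a : ℕ} (ha : a ∈ AG g {p | col p = v₀}) (N : ℕ) :
    ∃ n, N < n ∧ ForcesSummand g col v₀ a n := by
  choose L K hNL hLK hcol using hwin
  obtain ⟨F, x, ⟨q, hqF⟩, hFW, hx, rfl⟩ := ha
  set B := q + 1 + univ.sup fun v => K v N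
  set S := F ∪ {p ∈ range B | col p ≠ v₀}
  set y : ℕ → ℕ := fun p => if p ∈ F then x p else g (p + 1) / g p - 1
  have hS (p : ℕ) (hpB : p < B) (hp : col p ≠ v₀) : p ∈ S :=
    mem_union_right _ (mem_filter.2 ⟨mem_range.2 hpB, hp⟩)
  have hy (p : ℕ) (_ : p ∈ S) : y p ≤ g (p + 1) / g p - 1 := by
    by_cases hp : p ∈ F
    · simpa [y, hp] using (hx p hp).2
    · simp [y, hp]
  have hy_max (p : ℕ) (hp : col p ≠ v₀) : y p = g (p + 1) / g p - 1 :=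
    if_neg fun hpF => hp (hFW hpF)
  have hwin_mod (v : κ) (hv : v ≠ v₀) :
      Fintype.card κ * g (L v N) ≤ (∑ p ∈ S, y p * g p) % g (K v N + 1) := by
    have hLKv := hLK v N
    have := le_sup (f := fun v => K v N) (mem_univ v)
    refine (hg.mul_le_sub_of_lt_two_pow ht hLKv).trans (hg.sub_le_mod_of_maxDigit hy (by omega)
      (fun p hp => hS p ?_ (hcol v N p hp ▸ hv)) fun p hp => hy_max p (hcol v N p hp ▸ hv))
    have := (mem_Icc.1 hp).2
    omega
  have hlow : g q + ∑ p ∈ range (q + 1) with col p ≠ v₀, (g (p + 1) / g p - 1) * g p ≤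
      (∑ p ∈ S, y p * g p) % g (q + 1) := by
    refine hg.add_sum_maxDigit_le_mod hy (mem_union_left _ hqF)
      (by simpa [y, hqF] using (hx q hqF).1) (fun p hp => hS p ?_ (mem_filter.1 hp).2)
      (fun p hp => ?_) fun p hp => hy_max p (mem_filter.1 hp).2
    · have := mem_range.1 (mem_filter.1 hp).1
      omega
    · obtain ⟨hpq, hpv⟩ := mem_filter.1 hp
      exact lt_of_le_of_ne (Nat.lt_succ_iff.1 (mem_range.1 hpq)) fun h => hpv (h ▸ hFW hqF)
  have hdig (p : ℕ) (hp : col p = v₀) :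
      gadicDigit g (∑ p ∈ S, y p * g p) p = gadicDigit g (∑ j ∈ F, x j * g j) p := by
    rw [hg.gadicDigit_sum hy, hg.gadicDigit_sum fun j hj => (hx j hj).2]
    by_cases hpF : p ∈ F <;> simp [S, y, hpF, hp]
  obtain ⟨v, hv⟩ := Fintype.exists_ne_of_one_lt_card hκ v₀
  refine ⟨∑ p ∈ S, y p * g p, ?_, ⟨q, hFW hqF, hlow⟩,
    fun v hv => ⟨_, _, hcol v N, hwin_mod v hv⟩, hdig⟩
  calc N < L v N := hNL v N
    _ ≤ g (L v N) := hg.1.le_apply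
    _ ≤ Fintype.card κ * g (L v N) := Nat.le_mul_of_pos_left _ (by omega)
    _ ≤ _ := hwin_mod v hv
    _ ≤ _ := Nat.mod_le _ _

theorem exists_gt_not_isSumOf [Fintype κ] (hg : GadicSeq g) {t : ℕ} (hκ : 2 ≤ Fintype.card κ)
    (ht : Fintype.card κ < 2 ^ t)
    (hwin : ∀ v N, ∃ L K, N < L ∧ L + t = K + 1 ∧ ∀ p ∈ Icc L K, col p = v)
    {v₀ : κ} {a : ℕ} (ha : a ∈ AG g {p | col p = v₀}) (N : ℕ) :
    ∃ n, N < n ∧ ¬ IsSumOf ((⋃ v, AG g {p | col p = v}) \ {a}) (Fintype.card κ) n := by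
  obtain ⟨n, hNn, hn⟩ := hg.exists_gt_forcesSummand hκ ht hwin ha N
  refine ⟨n, hNn, fun ⟨f, hf, hsum⟩ => ?_⟩
  obtain ⟨i, hi⟩ := hg.exists_eq_of_sum_eq ha hn (fun i => (hf i).1) hsum
  exact (hf i).2 hi

end GadicSeq

lemma exists_eq_setOf_eq_of_partition {ι : Type*} {W : ι → Set ℕ}
    (hdisj : ∀ i j, i ≠ j → Disjoint (W i) (W j)) (hcover : ⋃ i, W i = Set.univ) :
    ∃ col : ℕ → ι, W = fun i => {p | col p = i} := by
  choose col hcol using fun p =>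
    Set.mem_iUnion.1 (hcover.symm ▸ Set.mem_univ p : p ∈ ⋃ i, W i)
  refine ⟨col, funext fun i => Set.ext fun p => ⟨fun hp => ?_, fun hp => hp ▸ hcol p⟩⟩
  by_contra hne
  exact Set.disjoint_left.1 (hdisj _ _ hne) (hcol p) hp

lemma lt_two_pow_of_log_le {h t : ℕ} (ht : (1 : ℝ) + Real.log h / Real.log 2 ≤ t) :
    h < 2 ^ t := by
  rcases Nat.eq_zero_or_pos h with rfl | hpos
  · positivity
  have hlog2 : 0 < Real.log 2 := Real.log_pos one_lt_two
  have hlog : Real.log h < Real.log (2 ^ t) := by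
    rw [Real.log_pow]
    have := (div_le_iff₀ hlog2).1 (show Real.log h / Real.log 2 ≤ t - 1 by linarith)
    nlinarith
  exact_mod_cast (Real.log_lt_log_iff (by positivity) (by positivity)).1 hlog

lemma infinite_and_not_asympBasis {A : Set ℕ} {h : ℕ}
    (hA : ∀ N, ∃ n, N < n ∧ ¬ IsSumOf A h n) :
    {n : ℕ | 0 < n ∧ ¬ IsSumOf A h n}.Infinite ∧ ¬ AsympBasis h A := by
  refine ⟨Set.infinite_of_forall_exists_gt fun N => ?_, fun ⟨N, hN⟩ => ?_⟩
  · obtain ⟨n, hNn, hn⟩ := hA N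
    exact ⟨n, ⟨by omega, hn⟩, hNn⟩
  · obtain ⟨n, hNn, hn⟩ := hA N
    exact hn (hN n hNn.le)

theorem gadic_remove_element_destroys_basis_general (h t : ℕ) (hh : 2 ≤ h)
    (ht : (1 : ℝ) + Real.log h / Real.log 2 ≤ t)
    (W : Fin h → Set ℕ)
    (hW2 : ∀ i j, i ≠ j → Disjoint (W i) (W j))
    (hW3 : ⋃ i, W i = Set.univ)
    (hM : ∀ i, ∃ Mi : Set ℕ, Mi.Infinite ∧
      ∀ M ∈ Mi, 0 < M ∧ Set.Icc (M + 1 - t) M ⊆ W i)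
    (g : ℕ → ℕ) (hg : GadicSeq g) :
    ∀ a ∈ ⋃ i, AG g (W i),
      {n : ℕ | 0 < n ∧ ¬ IsSumOf ((⋃ i, AG g (W i)) \ {a}) h n}.Infinite ∧
        ¬ AsympBasis h ((⋃ i, AG g (W i)) \ {a}) := by
  obtain ⟨col, rfl⟩ := exists_eq_setOf_eq_of_partition hW2 hW3
  intro a ha
  obtain ⟨v₀, ha⟩ := Set.mem_iUnion.1 ha
  have hwin (v : Fin h) (N : ℕ) :
      ∃ L K, N < L ∧ L + t = K + 1 ∧ ∀ p ∈ Icc L K, col p = v := by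
    obtain ⟨Mv, hMv, hsub⟩ := hM v
    obtain ⟨M, hM, hNM⟩ := hMv.exists_gt (N + t)
    exact ⟨M + 1 - t, M, by omega, by omega, fun p hp => (hsub M hM).2 (by simpa using hp)⟩
  refine infinite_and_not_asympBasis fun N => ?_
  simpa using hg.exists_gt_not_isSumOf (by simpa) (by simpa using lt_two_pow_of_log_le ht)
    hwin ha N

theorem gadic_remove_element_destroys_basis (h t : ℕ) (hh : 2 ≤ h)
    (ht : (1 : ℝ) + Real.log h / Real.log 2 ≤ t)
    (W : Fin h → Set ℕ) (hW1 : ∀ i, (W i).Nonempty)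
    (hW2 : ∀ i j, i ≠ j → Disjoint (W i) (W j))
    (hW3 : ⋃ i, W i = Set.univ)
    (hM : ∀ i, ∃ Mi : Set ℕ, Mi.Infinite ∧
      ∀ M ∈ Mi, 0 < M ∧ Set.Icc (M + 1 - t) M ⊆ W i)
    (g : ℕ → ℕ) (hg : GadicSeq g) :
    ∀ a ∈ ⋃ i, AG g (W i),
      {n : ℕ | 0 < n ∧ ¬ IsSumOf ((⋃ i, AG g (W i)) \ {a}) h n}.Infinite ∧
        ¬ AsympBasis h ((⋃ i, AG g (W i)) \ {a}) :=
  gadic_remove_element_destroys_basis_general h t hh ht W hW2 hW3 hM g hg
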